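/- arXiv:0804.0326 — 2 statements merged into one kernel-verified Lean document; each statement's English description precedes it below -/
import Mathlib

section
/- Every left adjoint 𝒯-functor f: X → Y between 𝒯-categories is cocontinuous: if g ≅ colim(ψ, h) exists for a 𝒯-functor h: A → X and weight ψ: A ⇸∘ B, then f·g ≅ colim(ψ, f·h). -/
/-! A left adjoint `f ⊣ g'` satisfies `f_* = g'^*`: `g'^* ≤ f_*` since `f` is a `𝒯`-functor
and `f·g' ≤ 1_Y`, while `f_* ≤ g'^*` since `g'` is a `𝒯`-functor and `1_X ≤ g'·f` forces
`(g'·f)_* ≤ a`. Any `f` with `f_* = g'^*` preserves `g_* = h_* ⟜ ψ`, because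
post-composing with `f` amounts to precomposing the second variable with `g'`:
`(f·g)_*(𝔷, y) = g_*(𝔷, g' y) = (h_* ⟜ ψ)(𝔷, g' y) = ((f·h)_* ⟜ ψ)(𝔷, y)`. -/

universe u

namespace Paper

/-- A strict topological theory `𝒯 = (𝕋, V, ξ)`: a commutative unital quantale `V`
(a complete lattice with a commutative monoid structure whose multiplication preserves
suprema in each variable, with `⊥ < k`), a `Set`-monad `𝕋 = (T, e, m)` such that `T`
sends pullbacks to weak pullbacks and the naturality squares of `m` are weak pullbacks,
and a `𝕋`-algebra structure `ξ : T V → V` for which `⊗` and `k` are `𝕋`-algebra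
homomorphisms and `ξ_X := ξ ∘ T(-)` is a (monotone) natural transformation
`P_V → P_V T`. -/
structure TopTheory (V : Type u) [CompleteLattice V] (T : Type u → Type u) where
  tens : V → V → V
  unit : V
  tens_comm : ∀ u v : V, tens u v = tens v u
  tens_assoc : ∀ u v w : V, tens (tens u v) w = tens u (tens v w)
  unit_tens : ∀ v : V, tens unit v = v
  tens_sSup : ∀ (u : V) (S : Set V), tens u (sSup S) = ⨆ v ∈ S, tens u v
  bot_lt_unit : (⊥ : V) < unit
  map : ∀ {X Y : Type u}, (X → Y) → T X → T Y
  map_id : ∀ {X : Type u}, map (id : X → X) = id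
  map_comp : ∀ {X Y Z : Type u} (g : Y → Z) (f : X → Y) (𝔵 : T X),
    map (g ∘ f) 𝔵 = map g (map f 𝔵)
  e : ∀ {X : Type u}, X → T X
  m : ∀ {X : Type u}, T (T X) → T X
  e_nat : ∀ {X Y : Type u} (f : X → Y) (x : X), map f (e x) = e (f x)
  m_nat : ∀ {X Y : Type u} (f : X → Y) (𝔛 : T (T X)), map f (m 𝔛) = m (map (map f) 𝔛)
  m_e : ∀ {X : Type u} (𝔵 : T X), m (e 𝔵) = 𝔵
  m_map_e : ∀ {X : Type u} (𝔵 : T X), m (map e 𝔵) = 𝔵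
  m_assoc : ∀ {X : Type u} (𝔜 : T (T (T X))), m (m 𝔜) = m (map m 𝔜)
  /-- (BC): `T` sends pullbacks to weak pullbacks. -/
  map_bc : ∀ {X Y Z : Type u} (f : X → Z) (g : Y → Z) (𝔵 : T X) (𝔶 : T Y),
    map f 𝔵 = map g 𝔶 →
    ∃ 𝔴 : T {p : X × Y // f p.1 = g p.2},
      map (fun p => p.1.1) 𝔴 = 𝔵 ∧ map (fun p => p.1.2) 𝔴 = 𝔶
  /-- (BC): every naturality square of `m` is a weak pullback. -/
  m_bc : ∀ {X Y : Type u} (f : X → Y) (𝔜 : T (T Y)) (𝔵 : T X),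
    m 𝔜 = map f 𝔵 → ∃ 𝔛 : T (T X), map (map f) 𝔛 = 𝔜 ∧ m 𝔛 = 𝔵
  xi : T V → V
  xi_e : ∀ v : V, xi (e v) = v
  xi_m : ∀ 𝔙 : T (T V), xi (m 𝔙) = xi (map xi 𝔙)
  /-- `k : 1 → V` is a `𝕋`-algebra homomorphism. -/
  xi_unit : ∀ {X : Type u} (𝔵 : T X), xi (map (fun _ => unit) 𝔵) = unit
  /-- `⊗ : V × V → V` is a `𝕋`-algebra homomorphism. -/
  xi_tens : ∀ 𝔴 : T (V × V),
    xi (map (fun p => tens p.1 p.2) 𝔴) = tens (xi (map Prod.fst 𝔴)) (xi (map Prod.snd 𝔴))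
  /-- each component `ξ_X : V^X → V^{T X}` is monotone. -/
  xi_mono : ∀ {X : Type u} (φ φ' : X → V), (∀ x, φ x ≤ φ' x) →
    ∀ 𝔵 : T X, xi (map φ 𝔵) ≤ xi (map φ' 𝔵)
  /-- `ξ_X` is a natural transformation `P_V → P_V T`. -/
  xi_nat : ∀ {X Y : Type u} (f : X → Y) (φ : X → V) (𝔶 : T Y),
    (⨆ 𝔵 : {𝔵 : T X // map f 𝔵 = 𝔶}, xi (map φ 𝔵.1)) =
      xi (map (fun y => ⨆ x : {x : X // f x = y}, φ x.1) 𝔶)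

namespace TopTheory

variable {V : Type u} [CompleteLattice V] {T : Type u → Type u}

/-- The internal hom of the quantale: `u ⊗ (-) ⊣ hom (u, -)`. -/
def ihom (𝒯 : TopTheory V T) (u w : V) : V := sSup {z | 𝒯.tens u z ≤ w}

/-- The extension `T_ξ` of `T : Set → Set` to `V`-relations. -/
def Txi (𝒯 : TopTheory V T) {X Y : Type u} (r : X → Y → V) (𝔵 : T X) (𝔶 : T Y) : V :=
  ⨆ 𝔴 : {w : T (X × Y) // 𝒯.map Prod.fst w = 𝔵 ∧ 𝒯.map Prod.snd w = 𝔶},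
    𝒯.xi (𝒯.map (fun p => r p.1 p.2) 𝔴.1)

/-- Kleisli convolution `β ∘ α = β · T_ξ α · m_X°` of `𝒯`-relations
`α : X ⇸ Y` and `β : Y ⇸ Z`. -/
def kleisli (𝒯 : TopTheory V T) {X Y Z : Type u}
    (β : T Y → Z → V) (α : T X → Y → V) (𝔵 : T X) (z : Z) : V :=
  ⨆ 𝔛 : {𝔛 : T (T X) // 𝒯.m 𝔛 = 𝔵}, ⨆ 𝔶 : T Y, 𝒯.tens (𝒯.Txi α 𝔛.1 𝔶) (β 𝔶 z)

/-- The `𝒯`-relation `e_X° : X ⇸ X`. -/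
def unitRel (𝒯 : TopTheory V T) (X : Type u) (𝔵 : T X) (x : X) : V :=
  ⨆ _ : 𝔵 = 𝒯.e x, 𝒯.unit

/-- A `𝒯`-category structure on `X`: a `𝒯`-relation `a : X ⇸ X` with
`e_X° ≤ a` and `a ∘ a ≤ a`. -/
structure TCatStr (𝒯 : TopTheory V T) (X : Type u) where
  rel : T X → X → V
  le_refl : ∀ x : X, 𝒯.unit ≤ rel (𝒯.e x) x
  comp : ∀ (𝔵 : T X) (x : X), 𝒯.kleisli rel rel 𝔵 x ≤ rel 𝔵 x

/-- The `𝒯`-module conditions `φ ∘ a ≤ φ` and `b ∘ φ ≤ φ` for a `𝒯`-relation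
`φ : X ⇸ Y` between (structures underlying) `𝒯`-categories `(X,a)` and `(Y,b)`. -/
def IsTModRel (𝒯 : TopTheory V T) {X Y : Type u}
    (a : T X → X → V) (b : T Y → Y → V) (φ : T X → Y → V) : Prop :=
  (∀ 𝔵 y, 𝒯.kleisli φ a 𝔵 y ≤ φ 𝔵 y) ∧ (∀ 𝔵 y, 𝒯.kleisli b φ 𝔵 y ≤ φ 𝔵 y)

variable {𝒯 : TopTheory V T}

/-- `f_* = b · T f`. -/
def modStar {X Y : Type u} (b : 𝒯.TCatStr Y) (f : X → Y) (𝔵 : T X) (y : Y) : V :=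
  b.rel (𝒯.map f 𝔵) y

/-- `f^* = f° · b`. -/
def modCostar {X Y : Type u} (b : 𝒯.TCatStr Y) (f : X → Y) (𝔶 : T Y) (x : X) : V :=
  b.rel 𝔶 (f x)

/-- The extension `φ ⟜ ψ` of `φ : X ⇸∘ Y` along `ψ : X ⇸∘ Z`, given by
`(φ ⟜ ψ)(𝔷,y) = ⋀_{𝔵 ∈ T X} hom((T_ξ ψ · m_X°)(𝔵,𝔷), φ(𝔵,y))`. -/
def extend (𝒯 : TopTheory V T) {X Y Z : Type u}
    (φ : T X → Y → V) (ψ : T X → Z → V) (𝔷 : T Z) (y : Y) : V :=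
  ⨅ 𝔵 : T X, 𝒯.ihom (⨆ 𝔛 : {𝔛 : T (T X) // 𝒯.m 𝔛 = 𝔵}, 𝒯.Txi ψ 𝔛.1 𝔷) (φ 𝔵 y)

/-- A `𝒯`-functor `f : (X,a) → (Y,b)`. -/
def IsTFunctor {X Y : Type u} (a : 𝒯.TCatStr X) (b : 𝒯.TCatStr Y) (f : X → Y) : Prop :=
  ∀ (𝔵 : T X) (x : X), a.rel 𝔵 x ≤ b.rel (𝒯.map f 𝔵) (f x)

/-- A fully faithful `𝒯`-functor. -/
def FullyFaithful {X Y : Type u} (a : 𝒯.TCatStr X) (b : 𝒯.TCatStr Y) (f : X → Y) : Prop :=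
  ∀ (𝔵 : T X) (x : X), a.rel 𝔵 x = b.rel (𝒯.map f 𝔵) (f x)

/-- The order `f ≤ g ⟺ f^* ≤ g^*` on `𝒯`-functors `X → (Y,b)`. -/
def funLE {X Y : Type u} (b : 𝒯.TCatStr Y) (f g : X → Y) : Prop :=
  ∀ (𝔶 : T Y) (x : X), b.rel 𝔶 (f x) ≤ b.rel 𝔶 (g x)

/-- Equivalence `f ≅ g ⟺ f^* = g^*` of `𝒯`-functors `X → (Y,b)`. -/
def FunEquiv {X Y : Type u} (b : 𝒯.TCatStr Y) (f g : X → Y) : Prop :=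
  ∀ (𝔶 : T Y) (x : X), b.rel 𝔶 (f x) = b.rel 𝔶 (g x)

/-- `f ⊣ g`:  `1_X ≤ g·f` and `f·g ≤ 1_Y`. -/
def IsAdjunction {X Y : Type u} (a : 𝒯.TCatStr X) (b : 𝒯.TCatStr Y)
    (f : X → Y) (g : Y → X) : Prop :=
  (∀ (𝔵 : T X) (x : X), a.rel 𝔵 x ≤ a.rel 𝔵 (g (f x))) ∧
    (∀ (𝔶 : T Y) (y : Y), b.rel 𝔶 (f (g y)) ≤ b.rel 𝔶 y)

/-- A left adjoint `𝒯`-functor. -/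
def IsLeftAdjoint {X Y : Type u} (a : 𝒯.TCatStr X) (b : 𝒯.TCatStr Y) (f : X → Y) : Prop :=
  IsTFunctor a b f ∧ ∃ g : Y → X, IsTFunctor b a g ∧ IsAdjunction a b f g

/-- L-separatedness: equivalent `𝒯`-functors into `X` are equal. -/
def Separated {X : Type u} (a : 𝒯.TCatStr X) : Prop :=
  ∀ (A : Type u) (as : 𝒯.TCatStr A) (f g : A → X),
    IsTFunctor as a f → IsTFunctor as a g → FunEquiv a f g → f = g

/-- Injectivity with respect to fully faithful `𝒯`-functors. -/
def Injective {X : Type u} (a : 𝒯.TCatStr X) : Prop :=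
  ∀ (A B : Type u) (as : 𝒯.TCatStr A) (bs : 𝒯.TCatStr B) (f : A → X) (i : A → B),
    IsTFunctor as a f → IsTFunctor as bs i → FullyFaithful as bs i →
      ∃ g : B → X, IsTFunctor bs a g ∧ FunEquiv a (g ∘ i) f

/-- `g : Z → X` is the `ψ`-weighted colimit of `h : A → X`, i.e. `g_* = h_* ⟜ ψ`. -/
def IsColimit {X A Z : Type u} (a : 𝒯.TCatStr X) (h : A → X) (ψ : T A → Z → V)
    (g : Z → X) : Prop :=
  ∀ (𝔷 : T Z) (x : X), modStar a g 𝔷 x = 𝒯.extend (modStar a h) ψ 𝔷 x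

/-- Cocompleteness: every weighted diagram has a colimit. -/
def Cocomplete {X : Type u} (a : 𝒯.TCatStr X) : Prop :=
  ∀ (A Z : Type u) (as : 𝒯.TCatStr A) (cs : 𝒯.TCatStr Z) (h : A → X),
    IsTFunctor as a h → ∀ ψ : T A → Z → V, 𝒯.IsTModRel as.rel cs.rel ψ →
      ∃ g : Z → X, IsTFunctor cs a g ∧ IsColimit a h ψ g

/-- Cocontinuity: preservation of all weighted colimits. -/
def Cocontinuous {X Y : Type u} (a : 𝒯.TCatStr X) (b : 𝒯.TCatStr Y) (f : X → Y) : Prop :=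
  ∀ (A Z : Type u) (as : 𝒯.TCatStr A) (cs : 𝒯.TCatStr Z) (h : A → X)
    (ψ : T A → Z → V) (g : Z → X),
    IsTFunctor as a h → 𝒯.IsTModRel as.rel cs.rel ψ → IsTFunctor cs a g →
      IsColimit a h ψ g → IsColimit b (f ∘ h) ψ (f ∘ g)

/-- A presheaf on `(X,a)`: a `𝒯`-module `X ⇸∘ G`, where `G = (1, e_1°)`. -/
def IsPresheaf {X : Type u} (a : 𝒯.TCatStr X) (ψ : T X → V) : Prop :=
  𝒯.IsTModRel a.rel (𝒯.unitRel PUnit) (fun 𝔵 _ => ψ 𝔵)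

/-- The underlying set of the presheaf `𝒯`-category `X̂`. -/
def Hat {X : Type u} (a : 𝒯.TCatStr X) : Type u := {ψ : T X → V // IsPresheaf a ψ}

/-- The `𝒯`-category structure `⟦-,-⟧` of `V^{|X|}`. -/
def powRel (𝒯 : TopTheory V T) (X : Type u) (𝔭 : T (T X → V)) (ψ : T X → V) : V :=
  ⨅ 𝔮 : {q : T ((T X) × (T X → V)) // 𝒯.map Prod.snd q = 𝔭},
    𝒯.ihom (𝒯.xi (𝒯.map (fun p => p.2 p.1) 𝔮.1)) (ψ (𝒯.m (𝒯.map Prod.fst 𝔮.1)))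

/-- `hs` is the `𝒯`-category structure on `X̂` inherited from `V^{|X|}`. -/
def IsHatStr {X : Type u} (a : 𝒯.TCatStr X) (hs : 𝒯.TCatStr (Hat a)) : Prop :=
  ∀ (𝔭 : T (Hat a)) (ψ : Hat a), hs.rel 𝔭 ψ = 𝒯.powRel X (𝒯.map Subtype.val 𝔭) ψ.1

/-- `y` is the Yoneda functor `X → X̂`, `y x = a(-,x)`. -/
def IsYoneda {X : Type u} (a : 𝒯.TCatStr X) (y : X → Hat a) : Prop :=
  ∀ (x : X) (𝔵 : T X), (y x).1 𝔵 = a.rel 𝔵 x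

/-- The underlying map `ψ ↦ ψ ∘ f^*` of `f̂ : X̂ → Ŷ`. -/
def hatMapRel {X Y : Type u} (b : 𝒯.TCatStr Y) (f : X → Y) (ψ : T X → V) (𝔶 : T Y) : V :=
  𝒯.kleisli (fun 𝔵 (_ : PUnit.{u + 1}) => ψ 𝔵) (modCostar b f) 𝔶 PUnit.unit

/-- `fh` is the `𝒯`-functor `f̂ : X̂ → Ŷ`, with underlying map `ψ ↦ ψ ∘ f^*`. -/
def IsHatMap {X Y : Type u} (a : 𝒯.TCatStr X) (b : 𝒯.TCatStr Y) (f : X → Y)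
    (fh : Hat a → Hat b) : Prop :=
  ∀ (ψ : Hat a) (𝔶 : T Y), (fh ψ).1 𝔶 = hatMapRel b f ψ.1 𝔶

/-- An inhabited `𝒯`-module: `k ≤ ⋀_y ⋁_𝔵 φ(𝔵,y)`. -/
def InhabitedMod (𝒯 : TopTheory V T) {X Y : Type u} (φ : T X → Y → V) : Prop :=
  𝒯.unit ≤ ⨅ y : Y, ⨆ 𝔵 : T X, φ 𝔵 y

/-- A dense `𝒯`-functor: `f_*` is inhabited. -/
def Dense {X Y : Type u} (b : 𝒯.TCatStr Y) (f : X → Y) : Prop :=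
  𝒯.InhabitedMod (modStar b f)

/-- The underlying set of `X⁺ = {ψ ∈ X̂ ∣ ψ inhabited}`. -/
def Plus {X : Type u} (a : 𝒯.TCatStr X) : Type u :=
  {ψ : Hat a // 𝒯.InhabitedMod (fun 𝔵 (_ : PUnit.{u + 1}) => ψ.1 𝔵)}

/-- `ps` is the `𝒯`-category structure on `X⁺` inherited from `X̂`. -/
def IsPlusStr {X : Type u} (a : 𝒯.TCatStr X) (hs : 𝒯.TCatStr (Hat a))
    (ps : 𝒯.TCatStr (Plus a)) : Prop :=
  ∀ (𝔭 : T (Plus a)) (ψ : Plus a), ps.rel 𝔭 ψ = hs.rel (𝒯.map Subtype.val 𝔭) ψ.1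

/-- Inhabited-cocompleteness: all colimits with inhabited weights exist. -/
def ICocomplete {X : Type u} (a : 𝒯.TCatStr X) : Prop :=
  ∀ (A Z : Type u) (as : 𝒯.TCatStr A) (cs : 𝒯.TCatStr Z) (h : A → X),
    IsTFunctor as a h → ∀ ψ : T A → Z → V, 𝒯.IsTModRel as.rel cs.rel ψ →
      𝒯.InhabitedMod ψ → ∃ g : Z → X, IsTFunctor cs a g ∧ IsColimit a h ψ g

/-- Inhabited-cocontinuity: preservation of all colimits with inhabited weights. -/
def ICocontinuous {X Y : Type u} (a : 𝒯.TCatStr X) (b : 𝒯.TCatStr Y) (f : X → Y) : Prop :=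
  ∀ (A Z : Type u) (as : 𝒯.TCatStr A) (cs : 𝒯.TCatStr Z) (h : A → X)
    (ψ : T A → Z → V) (g : Z → X),
    IsTFunctor as a h → 𝒯.IsTModRel as.rel cs.rel ψ → 𝒯.InhabitedMod ψ →
      IsTFunctor cs a g → IsColimit a h ψ g → IsColimit b (f ∘ h) ψ (f ∘ g)


lemma tens_mono_left (𝒯 : TopTheory V T) {u u' v : V} (h : u ≤ u') :
    𝒯.tens u v ≤ 𝒯.tens u' v := by
  rw [𝒯.tens_comm u v, 𝒯.tens_comm u' v, ← sup_eq_right.mpr h, ← sSup_pair, 𝒯.tens_sSup]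
  exact le_biSup (𝒯.tens v) (Set.mem_insert u {u'})

lemma unit_le_Txi_map (𝒯 : TopTheory V T) {X Y Z : Type u} {r : X → Y → V}
    {s : Z → X} {t : Z → Y} (hst : ∀ z, 𝒯.unit ≤ r (s z) (t z)) (𝔷 : T Z) :
    𝒯.unit ≤ 𝒯.Txi r (𝒯.map s 𝔷) (𝒯.map t 𝔷) := by
  refine le_iSup_of_le ⟨𝒯.map (fun z => (s z, t z)) 𝔷, ?_, ?_⟩ ?_
  · exact (𝒯.map_comp Prod.fst _ 𝔷).symm
  · exact (𝒯.map_comp Prod.snd _ 𝔷).symm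
  · calc 𝒯.unit = 𝒯.xi (𝒯.map (fun _ => 𝒯.unit) 𝔷) := (𝒯.xi_unit 𝔷).symm
      _ ≤ 𝒯.xi (𝒯.map ((fun p : X × Y => r p.1 p.2) ∘ fun z => (s z, t z)) 𝔷) :=
        𝒯.xi_mono _ _ hst 𝔷
      _ = _ := by rw [𝒯.map_comp]

/-- If `1_X ≤ p`, then `p_* ≤ a`. -/
lemma TCatStr.rel_map_le_of_unit_le {X : Type u} (a : 𝒯.TCatStr X) {p : X → X}
    (hp : ∀ x, 𝒯.unit ≤ a.rel (𝒯.e x) (p x)) (𝔵 : T X) (x : X) :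
    a.rel (𝒯.map p 𝔵) x ≤ a.rel 𝔵 x := by
  have hTxi : 𝒯.unit ≤ 𝒯.Txi a.rel (𝒯.map 𝒯.e 𝔵) (𝒯.map p 𝔵) := 𝒯.unit_le_Txi_map hp 𝔵
  calc a.rel (𝒯.map p 𝔵) x = 𝒯.tens 𝒯.unit (a.rel (𝒯.map p 𝔵) x) := (𝒯.unit_tens _).symm
    _ ≤ 𝒯.tens (𝒯.Txi a.rel (𝒯.map 𝒯.e 𝔵) (𝒯.map p 𝔵)) (a.rel (𝒯.map p 𝔵) x) :=
      𝒯.tens_mono_left hTxi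
    _ ≤ 𝒯.kleisli a.rel a.rel 𝔵 x :=
      le_iSup_of_le ⟨𝒯.map 𝒯.e 𝔵, 𝒯.m_map_e 𝔵⟩ (le_iSup_of_le (𝒯.map p 𝔵) le_rfl)
    _ ≤ a.rel 𝔵 x := a.comp 𝔵 x

lemma IsAdjunction.modStar_eq_modCostar {X Y : Type u} {a : 𝒯.TCatStr X} {b : 𝒯.TCatStr Y}
    {f : X → Y} {g : Y → X} (hf : IsTFunctor a b f) (hg : IsTFunctor b a g)
    (hadj : IsAdjunction a b f g) : modStar b f = modCostar a g := by
  funext 𝔵 y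
  apply le_antisymm
  · calc b.rel (𝒯.map f 𝔵) y ≤ a.rel (𝒯.map g (𝒯.map f 𝔵)) (g y) := hg _ y
      _ = a.rel (𝒯.map (g ∘ f) 𝔵) (g y) := by rw [𝒯.map_comp]
      _ ≤ a.rel 𝔵 (g y) :=
        a.rel_map_le_of_unit_le (fun x => (a.le_refl x).trans (hadj.1 _ x)) 𝔵 (g y)
  · exact (hf 𝔵 (g y)).trans (hadj.2 _ y)

lemma IsColimit.comp_of_modStar_eq_modCostar {X Y A Z : Type u} {a : 𝒯.TCatStr X}
    {b : 𝒯.TCatStr Y} {f : X → Y} {g' : Y → X} (hfg' : modStar b f = modCostar a g')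
    {h : A → X} {ψ : T A → Z → V} {g : Z → X} (hcol : IsColimit a h ψ g) :
    IsColimit b (f ∘ h) ψ (f ∘ g) := by
  have hcomp : ∀ {W : Type u} (k : W → X) 𝔴 y, modStar b (f ∘ k) 𝔴 y = modStar a k 𝔴 (g' y) :=
    fun k 𝔴 y => by
      rw [modStar, 𝒯.map_comp, ← modStar, hfg']
      rfl
  intro 𝔷 y
  rw [hcomp g, hcol]
  simp only [extend, hcomp h]

theorem statement14_general (𝒯 : TopTheory V T) {X Y : Type u}
    (a : 𝒯.TCatStr X) (b : 𝒯.TCatStr Y) (f : X → Y) (hf : IsLeftAdjoint a b f)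
    {A B : Type u} (h : A → X) (ψ : T A → B → V)
    (g : B → X) (hcol : IsColimit a h ψ g) :
    IsColimit b (f ∘ h) ψ (f ∘ g) := by
  obtain ⟨hf, g', hg', hadj⟩ := hf
  exact hcol.comp_of_modStar_eq_modCostar (hadj.modStar_eq_modCostar hf hg')

/-- Proposition 2.3(2). Every left adjoint `𝒯`-functor
`f : X → Y` is cocontinuous: if `g ≅ colim(ψ, h)` exists for a `𝒯`-functor
`h : A → X` and weight `ψ : A ⇸∘ B`, then `f·g ≅ colim(ψ, f·h)`. -/
theorem statement14 (𝒯 : TopTheory V T) {X Y : Type u}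
    (a : 𝒯.TCatStr X) (b : 𝒯.TCatStr Y) (f : X → Y) (hf : IsLeftAdjoint a b f)
    {A B : Type u} (as : 𝒯.TCatStr A) (bs : 𝒯.TCatStr B)
    (h : A → X) (hh : IsTFunctor as a h)
    (ψ : T A → B → V) (hψ : 𝒯.IsTModRel as.rel bs.rel ψ)
    (g : B → X) (hg : IsTFunctor bs a g) (hcol : IsColimit a h ψ g) :
    IsColimit b (f ∘ h) ψ (f ∘ g) :=
  statement14_general 𝒯 a b f hf h ψ g hcol

end TopTheory

end Paper
end

section
/- Let f: Y → X be a 𝒯-functor and ψ: Y ⇸∘ Z a 𝒯-module. Then colim(ψ, f) ≅ colim(ψ∘f^*, 1_X); consequently, a 𝒯-category X is cocomplete if and only if for every 𝒯-module ψ: X ⇸∘ Z the extension 1_X^* ⟜ ψ is of the form g_* for some 𝒯-functor g: Z → X, and a 𝒯-functor f: X → X' is cocontinuous if and only if it preserves all ψ-weighted colimits of 1_X. -/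
universe u

namespace Paper

namespace TopTheory

variable {V : Type u} [CompleteLattice V] {T : Type u → Type u}

variable {𝒯 : TopTheory V T}

/-!
A `ψ`-weighted colimit is defined through the extension `_ ⟜ ψ`, and `χ ≤ φ ⟜ ψ` holds exactly
when `χ ∘ ψ ≤ φ`. So for a map `h : A → X` and a `𝒯`-functor `f : X → X'`, the identity
`(f·h)_* ⟜ ψ = f_* ⟜ (ψ ∘ h^*)` (for `f = 1_X` this is `colim(ψ, h) ≅ colim(ψ ∘ h^*, 1_X)`)
reduces to the equivalence of `χ ∘ ψ ≤ (f·h)_*` and `(χ ∘ ψ) ∘ h^* ≤ f_*` for every `χ`: one way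
because `(f·h)_* ∘ h^* ≤ f_* ∘ a ≤ f_*`, the other because `ψ ≤ (ψ ∘ h^*) · T h`, which comes from
`e_X° ≤ a`. Rebracketing `χ ∘ (ψ ∘ h^*)` needs associativity of Kleisli convolution, which is
where the Beck–Chevalley conditions on `T` and `m` enter. The statements on cocompleteness and
cocontinuity follow because `ψ ∘ h^*` is again a `𝒯`-module.
-/

lemma map_id_apply {X : Type u} (𝔵 : T X) : 𝒯.map id 𝔵 = 𝔵 :=
  congrFun 𝒯.map_id 𝔵

lemma map_map {X Y Z : Type u} (g : Y → Z) (f : X → Y) (𝔵 : T X) :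
    𝒯.map g (𝒯.map f 𝔵) = 𝒯.map (fun x => g (f x)) 𝔵 :=
  (𝒯.map_comp g f 𝔵).symm

lemma tens_right_mono (u : V) : Monotone (𝒯.tens u) := by
  intro v w h
  have hsup := 𝒯.tens_sSup u {v, w}
  rw [sSup_pair, sup_eq_right.mpr h] at hsup
  rw [hsup]
  exact le_biSup _ (Set.mem_insert v {w})

lemma tens_le_tens {u u' v v' : V} (hu : u ≤ u') (hv : v ≤ v') :
    𝒯.tens u v ≤ 𝒯.tens u' v' :=
  calc 𝒯.tens u v ≤ 𝒯.tens u v' := tens_right_mono u hv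
    _ = 𝒯.tens v' u := 𝒯.tens_comm u v'
    _ ≤ 𝒯.tens v' u' := tens_right_mono v' hu
    _ = 𝒯.tens u' v' := 𝒯.tens_comm v' u'

lemma tens_iSup_right {ι : Sort*} (u : V) (s : ι → V) :
    𝒯.tens u (⨆ i, s i) = ⨆ i, 𝒯.tens u (s i) := by
  rw [iSup, 𝒯.tens_sSup, iSup_range]

lemma tens_iSup_left {ι : Sort*} (s : ι → V) (w : V) :
    𝒯.tens (⨆ i, s i) w = ⨆ i, 𝒯.tens (s i) w := by
  rw [𝒯.tens_comm, tens_iSup_right]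
  exact iSup_congr fun i => 𝒯.tens_comm w (s i)

lemma le_ihom_iff {u v w : V} : v ≤ 𝒯.ihom u w ↔ 𝒯.tens u v ≤ w := by
  refine ⟨fun h => (tens_right_mono u h).trans ?_, fun h => le_sSup h⟩
  rw [ihom, 𝒯.tens_sSup]
  exact iSup₂_le fun z hz => hz

lemma xi_map_tens {W : Type u} (r s : W → V) (𝔴 : T W) :
    𝒯.xi (𝒯.map (fun w => 𝒯.tens (r w) (s w)) 𝔴)
      = 𝒯.tens (𝒯.xi (𝒯.map r 𝔴)) (𝒯.xi (𝒯.map s 𝔴)) := by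
  simpa only [map_map] using 𝒯.xi_tens (𝒯.map (fun w => (r w, s w)) 𝔴)

lemma xi_map_le_iSup_fiber {W P : Type u} (f : W → P) (φ : W → V) {F : P → V}
    (hF : ∀ p, F p ≤ ⨆ w : {w : W // f w = p}, φ w.1) (𝔭 : T P) :
    𝒯.xi (𝒯.map F 𝔭) ≤ ⨆ 𝔴 : {𝔴 : T W // 𝒯.map f 𝔴 = 𝔭}, 𝒯.xi (𝒯.map φ 𝔴.1) :=
  (𝒯.xi_mono _ _ hF 𝔭).trans (𝒯.xi_nat f φ 𝔭).ge

lemma le_Txi_of_map {W X Y : Type u} (r : X → Y → V) (p : W → X) (q : W → Y)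
    {𝔵 : T X} {𝔶 : T Y} (𝔴 : T W) (hp : 𝒯.map p 𝔴 = 𝔵) (hq : 𝒯.map q 𝔴 = 𝔶) :
    𝒯.xi (𝒯.map (fun w => r (p w) (q w)) 𝔴) ≤ 𝒯.Txi r 𝔵 𝔶 := by
  refine le_iSup_of_le ⟨𝒯.map (fun w => (p w, q w)) 𝔴, ?_, ?_⟩ (le_of_eq ?_) <;>
    rw [map_map] <;> assumption

lemma le_Txi {X Y : Type u} (r : X → Y → V) (𝔴 : T (X × Y)) :
    𝒯.xi (𝒯.map (fun p => r p.1 p.2) 𝔴) ≤ 𝒯.Txi r (𝒯.map Prod.fst 𝔴) (𝒯.map Prod.snd 𝔴) :=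
  le_Txi_of_map r Prod.fst Prod.snd 𝔴 rfl rfl

lemma Txi_le {X Y : Type u} {r : X → Y → V} {𝔵 : T X} {𝔶 : T Y} {c : V}
    (h : ∀ 𝔴 : T (X × Y), 𝒯.map Prod.fst 𝔴 = 𝔵 → 𝒯.map Prod.snd 𝔴 = 𝔶 →
      𝒯.xi (𝒯.map (fun p => r p.1 p.2) 𝔴) ≤ c) :
    𝒯.Txi r 𝔵 𝔶 ≤ c :=
  iSup_le fun 𝔴 => h 𝔴.1 𝔴.2.1 𝔴.2.2

lemma Txi_mono {X Y : Type u} {r r' : X → Y → V} (h : ∀ x y, r x y ≤ r' x y)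
    (𝔵 : T X) (𝔶 : T Y) : 𝒯.Txi r 𝔵 𝔶 ≤ 𝒯.Txi r' 𝔵 𝔶 :=
  Txi_le fun 𝔴 h₁ h₂ => (𝒯.xi_mono _ _ (fun p => h p.1 p.2) 𝔴).trans (h₁ ▸ h₂ ▸ le_Txi r' 𝔴)

lemma Txi_precomp_left_le {X X' Y : Type u} (g : X → X') (θ : X' → Y → V)
    (𝔵 : T X) (𝔶 : T Y) :
    𝒯.Txi (fun x y => θ (g x) y) 𝔵 𝔶 ≤ 𝒯.Txi θ (𝒯.map g 𝔵) 𝔶 :=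
  Txi_le fun 𝔴 h₁ h₂ => le_Txi_of_map θ (fun p => g p.1) Prod.snd 𝔴 (by rw [← h₁, map_map]) h₂

lemma Txi_precomp_right_le {X Y Y' : Type u} (k : Y → Y') (θ : X → Y' → V)
    (𝔵 : T X) (𝔶 : T Y) :
    𝒯.Txi (fun x y => θ x (k y)) 𝔵 𝔶 ≤ 𝒯.Txi θ 𝔵 (𝒯.map k 𝔶) :=
  Txi_le fun 𝔴 h₁ h₂ => le_Txi_of_map θ Prod.fst (fun p => k p.2) 𝔴 h₁ (by rw [← h₂, map_map])

lemma unit_le_Txi {X Y : Type u} (r : X → Y → V) (g : Y → X)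
    (hr : ∀ y, 𝒯.unit ≤ r (g y) y) (𝔶 : T Y) :
    𝒯.unit ≤ 𝒯.Txi r (𝒯.map g 𝔶) 𝔶 :=
  calc 𝒯.unit = 𝒯.xi (𝒯.map (fun _ => 𝒯.unit) 𝔶) := (𝒯.xi_unit 𝔶).symm
    _ ≤ 𝒯.xi (𝒯.map (fun y => r (g y) y) 𝔶) := 𝒯.xi_mono _ _ hr 𝔶
    _ ≤ 𝒯.Txi r (𝒯.map g 𝔶) 𝔶 := le_Txi_of_map r g id 𝔶 rfl (map_id_apply 𝔶)

lemma Txi_comp_le {X Y Z : Type u} (r : X → Y → V) (s : Y → Z → V) (𝔵 : T X) (𝔷 : T Z) :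
    𝒯.Txi (fun x z => ⨆ y, 𝒯.tens (r x y) (s y z)) 𝔵 𝔷
      ≤ ⨆ 𝔶 : T Y, 𝒯.tens (𝒯.Txi r 𝔵 𝔶) (𝒯.Txi s 𝔶 𝔷) := by
  refine Txi_le fun 𝔴 h₁ h₂ => ?_
  have hfib : ∀ p : X × Z, (⨆ y, 𝒯.tens (r p.1 y) (s y p.2))
      ≤ ⨆ q : {q : X × Y × Z // (q.1, q.2.2) = p}, 𝒯.tens (r q.1.1 q.1.2.1) (s q.1.2.1 q.1.2.2) :=
    fun p => iSup_le fun y => le_iSup_of_le ⟨(p.1, y, p.2), rfl⟩ le_rfl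
  refine (xi_map_le_iSup_fiber (fun q : X × Y × Z => (q.1, q.2.2))
    (fun q => 𝒯.tens (r q.1 q.2.1) (s q.2.1 q.2.2)) hfib 𝔴).trans (iSup_le fun ⟨𝔮, h𝔮⟩ => ?_)
  rw [xi_map_tens]
  refine le_iSup_of_le (𝒯.map (fun q => q.2.1) 𝔮) (tens_le_tens ?_ ?_)
  · refine le_Txi_of_map r (fun q => q.1) (fun q => q.2.1) 𝔮 ?_ rfl
    rw [← h₁, ← h𝔮, map_map]
  · refine le_Txi_of_map s (fun q => q.2.1) (fun q => q.2.2) 𝔮 rfl ?_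
    rw [← h₂, ← h𝔮, map_map]

lemma iSup_tens_Txi_le {X Y Z : Type u} (r : X → Y → V) (s : Y → Z → V) (𝔵 : T X) (𝔷 : T Z) :
    ⨆ 𝔶 : T Y, 𝒯.tens (𝒯.Txi r 𝔵 𝔶) (𝒯.Txi s 𝔶 𝔷)
      ≤ 𝒯.Txi (fun x z => ⨆ y, 𝒯.tens (r x y) (s y z)) 𝔵 𝔷 := by
  refine iSup_le fun 𝔶 => ?_
  simp only [Txi, tens_iSup_left, tens_iSup_right, iSup_le_iff]
  rintro ⟨𝔴s, hs₁, hs₂⟩ ⟨𝔴r, hr₁, hr₂⟩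
  obtain ⟨𝔴, rfl, rfl⟩ := 𝒯.map_bc Prod.snd Prod.fst 𝔴r 𝔴s (hr₂.trans hs₁.symm)
  rw [map_map, map_map, ← xi_map_tens]
  have hle : ∀ p : {p : (X × Y) × Y × Z // p.1.2 = p.2.1},
      𝒯.tens (r p.1.1.1 p.1.1.2) (s p.1.2.1 p.1.2.2) ≤ ⨆ y, 𝒯.tens (r p.1.1.1 y) (s y p.1.2.2) :=
    fun p => le_iSup_of_le p.1.1.2 (by rw [p.2])
  refine (𝒯.xi_mono _ _ hle 𝔴).trans (le_Txi_of_map (fun x z => ⨆ y, 𝒯.tens (r x y) (s y z))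
    (fun p => p.1.1.1) (fun p => p.1.2.2) 𝔴 ?_ ?_)
  · rw [← hr₁, map_map]
  · rw [← hs₂, map_map]

lemma Txi_comp {X Y Z : Type u} (r : X → Y → V) (s : Y → Z → V) (𝔵 : T X) (𝔷 : T Z) :
    𝒯.Txi (fun x z => ⨆ y, 𝒯.tens (r x y) (s y z)) 𝔵 𝔷
      = ⨆ 𝔶 : T Y, 𝒯.tens (𝒯.Txi r 𝔵 𝔶) (𝒯.Txi s 𝔶 𝔷) :=
  (Txi_comp_le r s 𝔵 𝔷).antisymm (iSup_tens_Txi_le r s 𝔵 𝔷)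

lemma Txi_iSup_fiber {X X' Y : Type u} (g : X' → X) (θ : X' → Y → V) (𝔵 : T X) (𝔶 : T Y) :
    𝒯.Txi (fun x y => ⨆ x' : {x' : X' // g x' = x}, θ x'.1 y) 𝔵 𝔶
      = ⨆ 𝔵' : {𝔵' : T X' // 𝒯.map g 𝔵' = 𝔵}, 𝒯.Txi θ 𝔵'.1 𝔶 := by
  apply le_antisymm
  · refine Txi_le fun 𝔴 h₁ h₂ => ?_
    have hfib : ∀ p : X × Y, (⨆ x' : {x' : X' // g x' = p.1}, θ x'.1 p.2)
        ≤ ⨆ q : {q : X' × Y // (g q.1, q.2) = p}, θ q.1.1 q.1.2 :=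
      fun p => iSup_le fun ⟨x', hx'⟩ => le_iSup_of_le ⟨(x', p.2), by rw [hx']⟩ le_rfl
    refine (xi_map_le_iSup_fiber _ (fun q : X' × Y => θ q.1 q.2) hfib 𝔴).trans
      (iSup_le fun ⟨𝔮, h𝔮⟩ => ?_)
    refine le_iSup_of_le ⟨𝒯.map Prod.fst 𝔮, by rw [← h₁, ← h𝔮, map_map, map_map]⟩ ?_
    exact le_Txi_of_map θ Prod.fst Prod.snd 𝔮 rfl (by rw [← h₂, ← h𝔮, map_map])
  · refine iSup_le fun ⟨𝔵', h𝔵'⟩ => ?_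
    subst h𝔵'
    exact (Txi_mono (fun x' y => le_iSup_of_le (⟨x', rfl⟩ : {x'' : X' // g x'' = g x'}) le_rfl)
      𝔵' 𝔶).trans (Txi_precomp_left_le g (fun x y => ⨆ x' : {x' // g x' = x}, θ x'.1 y) 𝔵' 𝔶)

lemma Txi_Txi_le {X Y : Type u} (θ : X → Y → V) (𝔛 : T (T X)) (𝔜 : T (T Y)) :
    𝒯.Txi (𝒯.Txi θ) 𝔛 𝔜 ≤ 𝒯.Txi θ (𝒯.m 𝔛) (𝒯.m 𝔜) := by
  refine Txi_le fun 𝔴 h₁ h₂ => ?_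
  have hfib : ∀ p : T X × T Y, 𝒯.Txi θ p.1 p.2
      ≤ ⨆ w : {w : T (X × Y) // (𝒯.map Prod.fst w, 𝒯.map Prod.snd w) = p},
          𝒯.xi (𝒯.map (fun q => θ q.1 q.2) w.1) :=
    fun p => Txi_le fun w hw₁ hw₂ => le_iSup_of_le ⟨w, by rw [hw₁, hw₂]⟩ le_rfl
  refine (xi_map_le_iSup_fiber (fun w => (𝒯.map Prod.fst w, 𝒯.map Prod.snd w))
    (fun w => 𝒯.xi (𝒯.map (fun q => θ q.1 q.2) w)) hfib 𝔴).trans (iSup_le fun ⟨𝔚, h𝔚⟩ => ?_)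
  rw [← map_map, ← 𝒯.xi_m, ← 𝒯.m_nat]
  refine le_Txi_of_map θ Prod.fst Prod.snd (𝒯.m 𝔚) ?_ ?_
  · rw [𝒯.m_nat, ← h₁, ← h𝔚, map_map]
  · rw [𝒯.m_nat, ← h₂, ← h𝔚, map_map]

lemma Txi_m_le {X Y : Type u} (θ : X → Y → V) (𝔵 : T X) (𝔜 : T (T Y)) :
    𝒯.Txi θ 𝔵 (𝒯.m 𝔜) ≤ ⨆ 𝔛 : {𝔛 : T (T X) // 𝒯.m 𝔛 = 𝔵}, 𝒯.Txi (𝒯.Txi θ) 𝔛.1 𝔜 := by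
  refine Txi_le fun 𝔴 h₁ h₂ => ?_
  obtain ⟨𝔚, h𝔚, rfl⟩ := 𝒯.m_bc Prod.snd 𝔜 𝔴 h₂.symm
  refine le_iSup_of_le ⟨𝒯.map (𝒯.map Prod.fst) 𝔚, by rw [← 𝒯.m_nat, h₁]⟩ ?_
  rw [𝒯.m_nat, 𝒯.xi_m, map_map]
  exact (𝒯.xi_mono _ _ (le_Txi θ) 𝔚).trans
    (le_Txi_of_map (𝒯.Txi θ) (𝒯.map Prod.fst) (𝒯.map Prod.snd) 𝔚 rfl h𝔚)

lemma le_kleisli {X Y Z : Type u} {β : T Y → Z → V} {α : T X → Y → V} {𝔵 : T X}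
    (𝔛 : T (T X)) (h𝔛 : 𝒯.m 𝔛 = 𝔵) (𝔶 : T Y) (z : Z) :
    𝒯.tens (𝒯.Txi α 𝔛 𝔶) (β 𝔶 z) ≤ 𝒯.kleisli β α 𝔵 z :=
  le_iSup_of_le ⟨𝔛, h𝔛⟩ (le_iSup_of_le 𝔶 le_rfl)

lemma kleisli_le {X Y Z : Type u} {β : T Y → Z → V} {α : T X → Y → V} {𝔵 : T X} {z : Z}
    {c : V} (h : ∀ 𝔛 : T (T X), 𝒯.m 𝔛 = 𝔵 → ∀ 𝔶, 𝒯.tens (𝒯.Txi α 𝔛 𝔶) (β 𝔶 z) ≤ c) :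
    𝒯.kleisli β α 𝔵 z ≤ c :=
  iSup₂_le fun 𝔛 𝔶 => h 𝔛.1 𝔛.2 𝔶

lemma kleisli_mono {X Y Z : Type u} {α α' : T X → Y → V} {β β' : T Y → Z → V}
    (hα : ∀ 𝔵 y, α 𝔵 y ≤ α' 𝔵 y) (hβ : ∀ 𝔶 z, β 𝔶 z ≤ β' 𝔶 z) (𝔵 : T X) (z : Z) :
    𝒯.kleisli β α 𝔵 z ≤ 𝒯.kleisli β' α' 𝔵 z :=
  kleisli_le fun 𝔛 h𝔛 𝔶 => (tens_le_tens (Txi_mono hα 𝔛 𝔶) (hβ 𝔶 z)).trans (le_kleisli 𝔛 h𝔛 𝔶 z)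

lemma kleisli_le_kleisli_map {X X' Y Z : Type u} (g : X → X') {α : T X → Y → V}
    {α' : T X' → Y → V} (hα : ∀ 𝔵 y, α 𝔵 y ≤ α' (𝒯.map g 𝔵) y) (β : T Y → Z → V)
    (𝔵 : T X) (z : Z) :
    𝒯.kleisli β α 𝔵 z ≤ 𝒯.kleisli β α' (𝒯.map g 𝔵) z := by
  refine kleisli_le fun 𝔛 h𝔛 𝔶 => ?_
  have hTα : 𝒯.Txi α 𝔛 𝔶 ≤ 𝒯.Txi α' (𝒯.map (𝒯.map g) 𝔛) 𝔶 :=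
    (Txi_mono hα 𝔛 𝔶).trans (Txi_precomp_left_le (𝒯.map g) α' 𝔛 𝔶)
  exact (tens_le_tens hTα le_rfl).trans (le_kleisli _ (by rw [← 𝒯.m_nat, h𝔛]) 𝔶 z)

lemma kleisli_comap_le {X Y Y' Z : Type u} (k : Y → Y') (α : T X → Y' → V)
    {β : T Y → Z → V} {β' : T Y' → Z → V} (hβ : ∀ 𝔶 z, β 𝔶 z ≤ β' (𝒯.map k 𝔶) z)
    (𝔵 : T X) (z : Z) :
    𝒯.kleisli β (fun 𝔵 y => α 𝔵 (k y)) 𝔵 z ≤ 𝒯.kleisli β' α 𝔵 z :=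
  kleisli_le fun 𝔛 h𝔛 𝔶 =>
    (tens_le_tens (Txi_precomp_right_le k α 𝔛 𝔶) (hβ 𝔶 z)).trans (le_kleisli 𝔛 h𝔛 _ z)

lemma le_kleisli_map_of_unit_le {X Y Z : Type u} (β : T Y → Z → V) {α : T X → Y → V}
    (h : Y → X) (hα : ∀ y, 𝒯.unit ≤ α (𝒯.e (h y)) y) (𝔶 : T Y) (z : Z) :
    β 𝔶 z ≤ 𝒯.kleisli β α (𝒯.map h 𝔶) z := by
  have hm : 𝒯.m (𝒯.map (𝒯.e ∘ h) 𝔶) = 𝒯.map h 𝔶 := by rw [𝒯.map_comp, 𝒯.m_map_e]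
  calc β 𝔶 z = 𝒯.tens 𝒯.unit (β 𝔶 z) := (𝒯.unit_tens _).symm
    _ ≤ 𝒯.tens (𝒯.Txi α (𝒯.map (𝒯.e ∘ h) 𝔶) 𝔶) (β 𝔶 z) :=
      tens_le_tens (unit_le_Txi α (𝒯.e ∘ h) hα 𝔶) le_rfl
    _ ≤ 𝒯.kleisli β α (𝒯.map h 𝔶) z := le_kleisli _ hm 𝔶 z

lemma Txi_kleisli {X Y Z : Type u} (β : T Y → Z → V) (α : T X → Y → V) (𝔛 : T (T X))
    (𝔷 : T Z) :
    𝒯.Txi (𝒯.kleisli β α) 𝔛 𝔷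
      = ⨆ 𝔄 : {𝔄 : T (T (T X)) // 𝒯.map 𝒯.m 𝔄 = 𝔛}, ⨆ 𝔜 : T (T Y),
          𝒯.tens (𝒯.Txi (𝒯.Txi α) 𝔄.1 𝔜) (𝒯.Txi β 𝔜 𝔷) := by
  have hk : 𝒯.kleisli β α = fun 𝔵 z => ⨆ 𝔶 : T Y,
      𝒯.tens (⨆ 𝔛' : {𝔛' : T (T X) // 𝒯.m 𝔛' = 𝔵}, 𝒯.Txi α 𝔛'.1 𝔶) (β 𝔶 z) := by
    funext 𝔵 z
    simp only [kleisli, tens_iSup_left]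
    exact iSup_comm
  rw [hk, Txi_comp]
  simp only [Txi_iSup_fiber 𝒯.m (𝒯.Txi α), tens_iSup_left]
  exact iSup_comm

lemma kleisli_assoc {X Y Z W : Type u} (α : T X → Y → V) (β : T Y → Z → V)
    (χ : T Z → W → V) (𝔵 : T X) (w : W) :
    𝒯.kleisli (𝒯.kleisli χ β) α 𝔵 w = 𝒯.kleisli χ (𝒯.kleisli β α) 𝔵 w := by
  apply le_antisymm
  · refine kleisli_le fun 𝔛 h𝔛 𝔶 => ?_
    conv_lhs => rw [kleisli]
    simp only [tens_iSup_right, iSup_le_iff]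
    rintro ⟨𝔜, rfl⟩ 𝔷
    refine (tens_le_tens (Txi_m_le α 𝔛 𝔜) le_rfl).trans ?_
    simp only [tens_iSup_left, iSup_le_iff]
    rintro ⟨𝔄, rfl⟩
    rw [← 𝒯.tens_assoc]
    refine (tens_le_tens ?_ le_rfl).trans (le_kleisli (𝒯.map 𝒯.m 𝔄) (by rw [← 𝒯.m_assoc, h𝔛]) 𝔷 w)
    rw [Txi_kleisli]
    exact le_iSup_of_le ⟨𝔄, rfl⟩ (le_iSup_of_le 𝔜 le_rfl)
  · refine kleisli_le fun 𝔛 h𝔛 𝔷 => ?_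
    simp only [Txi_kleisli, tens_iSup_left, iSup_le_iff]
    rintro ⟨𝔄, rfl⟩ 𝔜
    rw [𝒯.tens_assoc]
    exact (tens_le_tens (Txi_Txi_le α 𝔄 𝔜) (le_kleisli 𝔜 rfl 𝔷 w)).trans
      (le_kleisli (𝒯.m 𝔄) (by rw [𝒯.m_assoc, h𝔛]) (𝒯.m 𝔜) w)

lemma isTFunctor_id {X : Type u} (a : 𝒯.TCatStr X) : IsTFunctor a a id :=
  fun 𝔵 x => (congrArg (a.rel · x) (map_id_apply 𝔵)).ge

lemma modStar_comp {X Y Z : Type u} (c : 𝒯.TCatStr Z) (f : Y → Z) (h : X → Y) (𝔵 : T X)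
    (z : Z) : modStar c (f ∘ h) 𝔵 z = modStar c f (𝒯.map h 𝔵) z :=
  congrArg (c.rel · z) (𝒯.map_comp f h 𝔵)

lemma kleisli_modStar_le {X Y : Type u} {a : 𝒯.TCatStr X} {b : 𝒯.TCatStr Y} {f : X → Y}
    (hf : IsTFunctor a b f) (𝔵 : T X) (y : Y) :
    𝒯.kleisli (modStar b f) a.rel 𝔵 y ≤ modStar b f 𝔵 y :=
  calc 𝒯.kleisli (modStar b f) a.rel 𝔵 y
      ≤ 𝒯.kleisli (modStar b f) (fun 𝔶 x => b.rel 𝔶 (f x)) (𝒯.map f 𝔵) y :=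
        kleisli_le_kleisli_map (α' := fun 𝔶 x => b.rel 𝔶 (f x)) f hf _ 𝔵 y
    _ ≤ 𝒯.kleisli b.rel b.rel (𝒯.map f 𝔵) y := kleisli_comap_le f b.rel (fun _ _ => le_rfl) _ y
    _ ≤ modStar b f 𝔵 y := b.comp _ y

lemma isTModRel_kleisli_modCostar {X A Z : Type u} (a : 𝒯.TCatStr X) {c : T Z → Z → V}
    (h : A → X) {ψ : T A → Z → V} (hψ : ∀ 𝔞 z, 𝒯.kleisli c ψ 𝔞 z ≤ ψ 𝔞 z) :
    𝒯.IsTModRel a.rel c (𝒯.kleisli ψ (modCostar a h)) := by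
  constructor
  · intro 𝔵 z
    rw [kleisli_assoc]
    exact kleisli_mono (fun 𝔵' y => a.comp 𝔵' (h y)) (fun _ _ => le_rfl) 𝔵 z
  · intro 𝔵 z
    rw [← kleisli_assoc]
    exact kleisli_mono (fun _ _ => le_rfl) hψ 𝔵 z

lemma forall_le_extend_iff {X Y Z : Type u} {φ : T X → Y → V} {ψ : T X → Z → V}
    {χ : T Z → Y → V} :
    (∀ 𝔷 y, χ 𝔷 y ≤ 𝒯.extend φ ψ 𝔷 y) ↔ ∀ 𝔵 y, 𝒯.kleisli χ ψ 𝔵 y ≤ φ 𝔵 y := by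
  simp only [extend, kleisli, le_iInf_iff, le_ihom_iff, tens_iSup_left, iSup_le_iff,
    Subtype.forall]
  exact ⟨fun H 𝔵 y 𝔛 h𝔛 𝔷 => H 𝔷 y 𝔵 𝔛 h𝔛, fun H 𝔷 y 𝔵 𝔛 h𝔛 => H 𝔵 y 𝔛 h𝔛 𝔷⟩

lemma extend_eq_extend_of_kleisli_le_iff {X X' Y Z : Type u} {φ : T X → Y → V} {ψ : T X → Z → V}
    {φ' : T X' → Y → V} {ψ' : T X' → Z → V}
    (h : ∀ χ : T Z → Y → V,
      (∀ 𝔵 y, 𝒯.kleisli χ ψ 𝔵 y ≤ φ 𝔵 y) ↔ ∀ 𝔵 y, 𝒯.kleisli χ ψ' 𝔵 y ≤ φ' 𝔵 y)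
    (𝔷 : T Z) (y : Y) :
    𝒯.extend φ ψ 𝔷 y = 𝒯.extend φ' ψ' 𝔷 y :=
  le_antisymm
    (forall_le_extend_iff.mpr ((h _).mp (forall_le_extend_iff.mp fun _ _ => le_rfl)) 𝔷 y)
    (forall_le_extend_iff.mpr ((h _).mpr (forall_le_extend_iff.mp fun _ _ => le_rfl)) 𝔷 y)

lemma extend_modStar_comp {X X' A Z : Type u} {a : 𝒯.TCatStr X} {a' : 𝒯.TCatStr X'}
    {f : X → X'} (hf : IsTFunctor a a' f) (h : A → X) (ψ : T A → Z → V) (𝔷 : T Z) (x' : X') :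
    𝒯.extend (modStar a' (f ∘ h)) ψ 𝔷 x'
      = 𝒯.extend (modStar a' f) (𝒯.kleisli ψ (modCostar a h)) 𝔷 x' := by
  refine extend_eq_extend_of_kleisli_le_iff (fun χ => ⟨fun H 𝔵 x' => ?_, fun H 𝔞 x' => ?_⟩) 𝔷 x'
  · rw [← kleisli_assoc]
    calc 𝒯.kleisli (𝒯.kleisli χ ψ) (modCostar a h) 𝔵 x'
        ≤ 𝒯.kleisli (modStar a' (f ∘ h)) (modCostar a h) 𝔵 x' :=
          kleisli_mono (fun _ _ => le_rfl) H 𝔵 x'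
      _ ≤ 𝒯.kleisli (modStar a' f) a.rel 𝔵 x' :=
          kleisli_comap_le h a.rel (fun 𝔞 x' => (modStar_comp a' f h 𝔞 x').le) 𝔵 x'
      _ ≤ modStar a' f 𝔵 x' := kleisli_modStar_le hf 𝔵 x'
  · calc 𝒯.kleisli χ ψ 𝔞 x'
        ≤ 𝒯.kleisli χ (𝒯.kleisli ψ (modCostar a h)) (𝒯.map h 𝔞) x' :=
          kleisli_le_kleisli_map h (le_kleisli_map_of_unit_le ψ h fun y => a.le_refl (h y)) χ 𝔞 x'
      _ ≤ modStar a' f (𝒯.map h 𝔞) x' := H _ x'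
      _ = modStar a' (f ∘ h) 𝔞 x' := (modStar_comp a' f h 𝔞 x').symm

lemma isColimit_comp_iff {X X' A Z : Type u} {a : 𝒯.TCatStr X} {a' : 𝒯.TCatStr X'}
    {f : X → X'} (hf : IsTFunctor a a' f) (h : A → X) (ψ : T A → Z → V) (g : Z → X') :
    IsColimit a' (f ∘ h) ψ g ↔ IsColimit a' f (𝒯.kleisli ψ (modCostar a h)) g := by
  simp only [IsColimit, extend_modStar_comp hf]

/-- Lemma 2.2. `colim(ψ, f) ≅ colim(ψ ∘ f^*, 1_X)`; consequently
`X` is cocomplete iff for every `𝒯`-module `ψ : X ⇸∘ Z` the extension `1_X^* ⟜ ψ` is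
`g_*` for some `𝒯`-functor `g : Z → X`, and a `𝒯`-functor `f : X → X'` is
cocontinuous iff it preserves all `ψ`-weighted colimits of `1_X`. -/
theorem statement15 (𝒯 : TopTheory V T) {X : Type u} (a : 𝒯.TCatStr X) :
    (∀ (Y Z : Type u) (bs : 𝒯.TCatStr Y) (cs : 𝒯.TCatStr Z) (f : Y → X),
       IsTFunctor bs a f → ∀ ψ : T Y → Z → V, 𝒯.IsTModRel bs.rel cs.rel ψ →
       ∀ g : Z → X,
         (IsColimit a f ψ g ↔ IsColimit a id (𝒯.kleisli ψ (modCostar a f)) g)) ∧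
    (Cocomplete a ↔
      ∀ (Z : Type u) (cs : 𝒯.TCatStr Z) (ψ : T X → Z → V),
        𝒯.IsTModRel a.rel cs.rel ψ →
        ∃ g : Z → X, IsTFunctor cs a g ∧ IsColimit a id ψ g) ∧
    (∀ (X' : Type u) (a' : 𝒯.TCatStr X') (f : X → X'), IsTFunctor a a' f →
      (Cocontinuous a a' f ↔
        ∀ (Z : Type u) (cs : 𝒯.TCatStr Z) (ψ : T X → Z → V),
          𝒯.IsTModRel a.rel cs.rel ψ →
          ∀ g : Z → X, IsTFunctor cs a g → IsColimit a id ψ g →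
            IsColimit a' f ψ (f ∘ g))) := by
  have hid := isTFunctor_id a
  refine ⟨fun Y Z bs cs f _ ψ _ g => isColimit_comp_iff hid f ψ g, ⟨?_, ?_⟩, ?_⟩
  · intro hcc Z cs ψ hψ
    exact hcc X Z a cs id hid ψ hψ
  · intro H A Z as cs h _ ψ hψ
    obtain ⟨g, hg, hcol⟩ := H Z cs _ (isTModRel_kleisli_modCostar a h hψ.2)
    exact ⟨g, hg, (isColimit_comp_iff hid h ψ g).mpr hcol⟩
  · intro X' a' f hf
    refine ⟨fun hcc Z cs ψ hψ g hg hcol => hcc X Z a cs id ψ g hid hψ hg hcol, ?_⟩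
    intro H A Z as cs h ψ g _ hψ hg hcol
    refine (isColimit_comp_iff hf h ψ (f ∘ g)).mpr ?_
    exact H Z cs _ (isTModRel_kleisli_modCostar a h hψ.2) g hg
      ((isColimit_comp_iff hid h ψ g).mp hcol)

end TopTheory

end Paper
end
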